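/- arXiv:2308.01596 — 2 statements merged into one kernel-verified Lean document; each statement's English description precedes it below -/
import Mathlib

section
/- Let σ² > 0, λ² > 0 with 1−ν ≤ λ²/σ² ≤ 1+ν for some 0 ≤ ν < 1. Suppose a weight random variable W satisfies 0 ≤ W ≤ 1 a.s. and E[(A−μ)²(1−W)²] ≤ λ²E[(1−W)²]. Then MSFE(IW) − σ² − min{σ², λ²} ≤ σ²ν, where MSFE(IW) = σ² + σ²E[W²] + E[(A−μ)²(1−W)²]. -/
open MeasureTheory

/-- Let σ² > 0, λ² > 0 with 1−ν ≤ λ²/σ² ≤ 1+ν for some 0 ≤ ν < 1.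
If 0 ≤ W ≤ 1 a.s. and E[(A−μ)²(1−W)²] ≤ λ²E[(1−W)²] (with λ² = E[(A−μ)²]),
then MSFE(IW) − σ² − min{σ², λ²} ≤ σ²ν, where
MSFE(IW) = σ² + σ²E[W²] + E[(A−μ)²(1−W)²]. -/
theorem regret_IW_bound {Ω : Type*} [MeasurableSpace Ω] (P : Measure Ω) [IsProbabilityMeasure P]
    (A W : Ω → ℝ) (mu l2 σ2 ν : ℝ) (hσ : 0 < σ2) (hl : 0 < l2)
    (hν0 : 0 ≤ ν) (hν1 : ν < 1)
    (hlo : 1 - ν ≤ l2 / σ2) (hhi : l2 / σ2 ≤ 1 + ν)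
    (hAvar : ∫ ω, (A ω - mu) ^ 2 ∂P = l2)
    (hW01 : ∀ᵐ ω ∂P, W ω ∈ Set.Icc (0 : ℝ) 1)
    (hintW : Integrable (fun ω => (W ω) ^ 2) P)
    (hint1 : Integrable (fun ω => (1 - W ω) ^ 2) P)
    (hint2 : Integrable (fun ω => (A ω - mu) ^ 2 * (1 - W ω) ^ 2) P)
    (hkey : ∫ ω, (A ω - mu) ^ 2 * (1 - W ω) ^ 2 ∂P ≤ l2 * ∫ ω, (1 - W ω) ^ 2 ∂P) :
    (σ2 + σ2 * (∫ ω, (W ω) ^ 2 ∂P) + ∫ ω, (A ω - mu) ^ 2 * (1 - W ω) ^ 2 ∂P)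
      - σ2 - min σ2 l2 ≤ σ2 * ν := by
  set a := ∫ ω, (W ω) ^ 2 ∂P with ha
  set b := ∫ ω, (1 - W ω) ^ 2 ∂P with hb
  set c := ∫ ω, (A ω - mu) ^ 2 * (1 - W ω) ^ 2 ∂P with hc
  have ha0 : 0 ≤ a := integral_nonneg fun ω => sq_nonneg _
  have hb0 : 0 ≤ b := integral_nonneg fun ω => sq_nonneg _
  have hab : a + b ≤ 1 := by
    have h1 : ∫ ω, ((W ω) ^ 2 + (1 - W ω) ^ 2) ∂P ≤ ∫ _ω, (1 : ℝ) ∂P := by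
      apply integral_mono_ae (hintW.add hint1) (integrable_const 1)
      filter_upwards [hW01] with ω hω
      obtain ⟨h0, h1⟩ := hω
      simp only [Pi.add_apply]
      nlinarith
    rw [integral_add hintW hint1] at h1
    simpa using h1
  have hL : σ2 * (1 - ν) ≤ l2 := by
    nlinarith [(le_div_iff₀ hσ).mp hlo]
  have hU : l2 ≤ σ2 * (1 + ν) := by
    nlinarith [(div_le_iff₀ hσ).mp hhi]
  rcases le_total σ2 l2 with h | h
  · rw [min_eq_left h]
    nlinarith
  · rw [min_eq_right h]
    nlinarith
end

section
/- Fix ζ̃² > 0. For w ∈ [0,1] define the maximum regret M(w) = max{ w², w² + ζ̃²(1−w)² − ζ̃²/(ζ̃²+1) }. Then M is uniquely minimized at w̃ = 1 − 1/√(ζ̃² + 1), and at this point both expressions inside the max are equal. -/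
/-!
Write `s = √(ζ̃² + 1)` and `w̃ = 1 - 1/s`. Since `ζ̃² (1 - w̃)² = ζ̃²/s² = ζ̃²/(ζ̃² + 1)`, the two branches
agree at `w̃`. To the right of `w̃` the first branch `w²` is already larger, as `w̃ ≥ 0`. To the left,
the second branch is a convex parabola with vertex `ζ̃²/(ζ̃² + 1) = 1 - 1/s² ≥ w̃`, hence strictly
decreasing there.
-/

open Real

noncomputable section

namespace MinimaxRegret

/-- The regret `r(w, ζ̃²)` at the upper end of the parameter range, with `z = ζ̃²`. -/
def boundaryRegret (z w : ℝ) : ℝ := w ^ 2 + z * (1 - w) ^ 2 - z / (z + 1)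

def maxRegret (z w : ℝ) : ℝ := max (w ^ 2) (boundaryRegret z w)

def minimaxWeight (z : ℝ) : ℝ := 1 - 1 / √(z + 1)

variable {z : ℝ}

theorem one_le_sqrt_add_one (hz : 0 ≤ z) : 1 ≤ √(z + 1) :=
  one_le_sqrt.mpr (by linarith)

theorem minimaxWeight_nonneg (hz : 0 ≤ z) : 0 ≤ minimaxWeight z :=
  sub_nonneg.mpr (div_le_one_of_le₀ (one_le_sqrt_add_one hz) (sqrt_nonneg _))

theorem minimaxWeight_le_div (hz : 0 ≤ z) : minimaxWeight z ≤ z / (z + 1) := by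
  have hs := one_le_sqrt_add_one hz
  have hs2 : √(z + 1) ^ 2 = z + 1 := sq_sqrt (by linarith)
  have hvertex : z / (z + 1) = 1 - 1 / √(z + 1) ^ 2 := by
    rw [hs2]; field_simp; ring
  rw [minimaxWeight, hvertex, sub_le_sub_iff_left]
  exact one_div_le_one_div_of_le (by positivity) (le_self_pow₀ hs two_ne_zero)

theorem boundaryRegret_minimaxWeight (hz : -1 ≤ z) :
    boundaryRegret z (minimaxWeight z) = minimaxWeight z ^ 2 := by
  have hs2 : √(z + 1) ^ 2 = z + 1 := sq_sqrt (by linarith)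
  have : z * (1 - minimaxWeight z) ^ 2 = z / (z + 1) := by
    rw [minimaxWeight, sub_sub_cancel, div_pow, hs2, one_pow, mul_one_div]
  rw [boundaryRegret, this]
  ring

theorem maxRegret_minimaxWeight (hz : -1 ≤ z) :
    maxRegret z (minimaxWeight z) = minimaxWeight z ^ 2 := by
  rw [maxRegret, boundaryRegret_minimaxWeight hz, max_self]

theorem boundaryRegret_strictAntiOn (hz : -1 < z) :
    StrictAntiOn (boundaryRegret z) (Set.Iic (z / (z + 1))) := by
  intro a _ b hb hab
  have hz1 : 0 < z + 1 := by linarith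
  have hb' : b * (z + 1) ≤ z := (le_div_iff₀ hz1).mp hb
  have ha' : a * (z + 1) < b * (z + 1) := mul_lt_mul_of_pos_right hab hz1
  have hsum : (z + 1) * (a + b) < 2 * z := by linarith
  have hdiff : boundaryRegret z a - boundaryRegret z b = (b - a) * (2 * z - (z + 1) * (a + b)) := by
    rw [boundaryRegret, boundaryRegret]; ring
  have : 0 < (b - a) * (2 * z - (z + 1) * (a + b)) := mul_pos (by linarith) (by linarith)
  linarith

theorem maxRegret_minimaxWeight_lt (hz : 0 ≤ z) {w : ℝ} (hne : w ≠ minimaxWeight z) :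
    maxRegret z (minimaxWeight z) < maxRegret z w := by
  have hz' : -1 < z := by linarith
  rw [maxRegret_minimaxWeight hz'.le]
  rcases hne.lt_or_gt with hlt | hgt
  · refine lt_max_of_lt_right ?_
    rw [← boundaryRegret_minimaxWeight hz'.le]
    have hvertex := minimaxWeight_le_div hz
    exact boundaryRegret_strictAntiOn hz' (hlt.le.trans hvertex) hvertex hlt
  · exact lt_max_of_lt_left (pow_lt_pow_left₀ hgt (minimaxWeight_nonneg hz) two_ne_zero)

end MinimaxRegret

open MinimaxRegret in
/-- For ζ̃² > 0 and `M w = max{w², w² + ζ̃²(1-w)² − ζ̃²/(ζ̃²+1)}` on [0,1],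
`M` is uniquely minimized at `w̃ = 1 − 1/√(ζ̃²+1)`, where the two branches of the max agree. -/
theorem minimax_regret_weight (z : ℝ) (hz : 0 < z) :
    (∀ w ∈ Set.Icc (0 : ℝ) 1, w ≠ 1 - 1 / Real.sqrt (z + 1) →
      max ((1 - 1 / Real.sqrt (z + 1)) ^ 2)
          ((1 - 1 / Real.sqrt (z + 1)) ^ 2 + z * (1 - (1 - 1 / Real.sqrt (z + 1))) ^ 2
            - z / (z + 1)) <
        max (w ^ 2) (w ^ 2 + z * (1 - w) ^ 2 - z / (z + 1))) ∧
    (1 - 1 / Real.sqrt (z + 1)) ^ 2 =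
      (1 - 1 / Real.sqrt (z + 1)) ^ 2 + z * (1 - (1 - 1 / Real.sqrt (z + 1))) ^ 2
        - z / (z + 1) :=
  ⟨fun _ _ hne => maxRegret_minimaxWeight_lt hz.le hne,
    (boundaryRegret_minimaxWeight (by linarith)).symm⟩
end
end
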